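/- Let (C_β) be a global square sequence with associated function n. For every natural number k, the class {β : β is a singular limit ordinal and n(β) ≥ k} is stationary in the ordinals: it intersects every closed unbounded class of ordinals. -/

import Mathlib

open Set

/-- The order type of a set of ordinals: the unique ordinal `o` such that
`Set.Iio o` is order-isomorphic to `X` (or `0` if no such ordinal exists,
which can only happen for proper-class-sized `X`). -/
noncomputable def otype.{u} (X : Set Ordinal.{u}) : Ordinal.{u} :=
  sInf {o : Ordinal.{u} | Nonempty (Set.Iio o ≃o X)}

/-- A set (or class) of ordinals is closed if it contains the supremum of every
nonempty bounded-above subset of itself. -/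
def IsClosedSet (C : Set Ordinal) : Prop :=
  ∀ s : Set Ordinal, s ⊆ C → s.Nonempty → BddAbove s → sSup s ∈ C

/-- `limPts X` is the class of limit ordinals `γ` with `sup (X ∩ γ) = γ`. -/
def limPts (X : Set Ordinal) : Set Ordinal :=
  {γ | Order.IsSuccLimit γ ∧ sSup (X ∩ Set.Iio γ) = γ}

/-- An ordinal is singular if it is a limit ordinal whose cofinality is smaller
than itself. -/
def IsSing (β : Ordinal) : Prop := Order.IsSuccLimit β ∧ β.cof.ord < β

/-- `X` is a closed unbounded subset of the ordinal `β`. -/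
def IsClubIn (X : Set Ordinal) (β : Ordinal) : Prop :=
  X ⊆ Set.Iio β ∧
    (∀ s : Set Ordinal, s ⊆ X → s.Nonempty → sSup s < β → sSup s ∈ X) ∧
    ∀ η < β, ∃ x ∈ X, η < x

/-- A global square sequence. -/
structure GlobalSquare where
  C : Ordinal → Set Ordinal
  club : ∀ β, IsSing β → IsClubIn (C β) β
  ot_lt : ∀ β, IsSing β → otype (C β) < β
  coh : ∀ β, IsSing β → ∀ γ ∈ limPts (C β), γ < β →
    IsSing γ ∧ C γ = C β ∩ Set.Iio γ

/-- `ν` is the function `n` associated to the global square sequence `S`. -/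
def IsAssocFn (S : GlobalSquare) (ν : Ordinal → ℕ) : Prop :=
  open scoped Classical in
  ∀ β, IsSing β →
    ν β = if IsSing (otype (S.C β)) then ν (otype (S.C β)) + 1 else 0

/-- Iterated cardinal successor: `succIt α k = α⁺...⁺` (`k` times). -/
noncomputable def succIt (α : Cardinal) : ℕ → Cardinal
  | 0 => α
  | k + 1 => Order.succ (succIt α k)

/-- An ordinal which is (the ordinal of) a regular cardinal. -/
def IsRegOrd (α : Ordinal) : Prop := ∃ κ : Cardinal, κ.IsRegular ∧ α = κ.ord

/-- End-extension ordering: `EndExt p q` means `p ≤ q`, i.e. `p` end-extends `q`. -/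
def EndExt (p q : Set Ordinal) : Prop :=
  q ⊆ p ∧ ∀ x ∈ p \ q, ∀ y ∈ q, y < x

/-- The class forcing associated to a square sequence with associated function `ν`
and `k ∈ ℕ`: nonempty closed bounded sets of ordinals all of whose elements are
regular cardinals or singular of `ν`-value at least `k+1`. -/
def Pforcing (ν : Ordinal → ℕ) (k : ℕ) : Set (Set Ordinal) :=
  {p | p.Nonempty ∧ IsClosedSet p ∧ BddAbove p ∧
    ∀ α ∈ p, IsRegOrd α ∨ (IsSing α ∧ k + 1 ≤ ν α)}

/-!
By induction on `k`: every club `F` in an ordinal `μ` with `cof μ ≥ ℵ_(k+1)` contains a singular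
`γ` with `n γ ≥ k`. Reflecting `F`, pick `β ∈ F` above `ω_k` of cofinality `ℵ_k`; it is singular.
For the step to `k + 1`, `cof β = ℵ_(k+1) > ℵ₀`, so `C_β ∩ F` is club in `β`. Enumerate `C_β`
by a normal function `f` with `f m = β`, `m = ot C_β`, so `cof m = cof β`; the preimage of
`C_β ∩ F` is club in `m` and by induction contains a singular `σ` with `n σ ≥ k`. Then
`γ = f σ ∈ F` is a limit point of `C_β`, so by coherence `C_γ = C_β ∩ γ` has order type `σ` and
`n γ = n σ + 1`. For the class `C`, apply this below its `ω_(k+1)`-th element.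
-/

open Order Ordinal Cardinal

universe u

lemma otype_eq_of_orderIso {X : Set Ordinal.{u}} {o : Ordinal.{u}} (e : Iio o ≃o X) :
    otype X = o := by
  have : {o' : Ordinal.{u} | Nonempty (Iio o' ≃o X)} = {o} := by
    ext o'
    refine ⟨fun ⟨e'⟩ ↦ ?_, fun h ↦ h ▸ ⟨e⟩⟩
    have := (e'.trans e.symm).toRelIsoLT.ordinalType_congr
    rwa [type_lt_Iio, type_lt_Iio, Ordinal.lift_inj] at this
  rw [otype, this, csInf_singleton]

lemma StrictMono.otype_image_Iio {f : Ordinal.{u} → Ordinal.{u}} (hf : StrictMono f)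
    (m : Ordinal.{u}) : otype (f '' Iio m) = m :=
  otype_eq_of_orderIso ((hf.strictMonoOn (Iio m)).orderIso f (Iio m))

lemma StrictMono.range_inter_Iio {f : Ordinal.{u} → Ordinal.{u}} (hf : StrictMono f)
    (a : Ordinal.{u}) : range f ∩ Iio (f a) = f '' Iio a := by
  ext x
  constructor
  · rintro ⟨⟨i, rfl⟩, hi⟩
    exact ⟨i, hf.lt_iff_lt.1 hi, rfl⟩
  · rintro ⟨i, hi, rfl⟩
    exact ⟨⟨i, rfl⟩, hf hi⟩

lemma StrictMono.image_Iio_inter_Iio {f : Ordinal.{u} → Ordinal.{u}} (hf : StrictMono f)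
    {a b : Ordinal.{u}} (hab : a ≤ b) : f '' Iio b ∩ Iio (f a) = f '' Iio a := by
  refine subset_antisymm ?_ ?_
  · rw [← hf.range_inter_Iio a]
    exact inter_subset_inter_left _ (image_subset_range _ _)
  · exact subset_inter (image_mono (Iio_subset_Iio hab)) (image_subset_iff.2 fun i hi ↦ hf hi)

section Club

variable {X Y : Set Ordinal.{u}} {β : Ordinal.{u}} {f : Ordinal.{u} → Ordinal.{u}}

lemma Order.IsNormal.isClubIn_image_Iio (hf : IsNormal f) {a : Ordinal.{u}}
    (ha : IsSuccLimit a) : IsClubIn (f '' Iio a) (f a) := by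
  refine ⟨image_subset_iff.2 fun i hi ↦ hf.strictMono hi, fun s hs hne hlt ↦ ?_, fun η hη ↦ ?_⟩
  · set t := f ⁻¹' s ∩ Iio a
    have hst : f '' t = s := by
      rw [image_preimage_inter]; exact inter_eq_left.2 hs
    have ht : t.Nonempty := by
      rw [← image_nonempty, hst]; exact hne
    have hsup : f (sSup t) = sSup s := by
      rw [hf.map_sSup ht ⟨a, fun i hi ↦ hi.2.le⟩, hst]
    rw [← hsup] at hlt ⊢
    exact mem_image_of_mem f (hf.strictMono.lt_iff_lt.1 hlt)
  · obtain ⟨i, hi, hηi⟩ := (hf.lt_iff_exists_lt ha).1 hη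
    exact ⟨f i, mem_image_of_mem f hi, hηi⟩

/-- Enumerate the closed unbounded class `X ∪ Ici β`. -/
lemma IsClubIn.exists_isNormal (hX : IsClubIn X β) :
    ∃ f : Ordinal.{u} → Ordinal.{u}, IsNormal f ∧ ∃ m, f m = β ∧ f '' Iio m = X := by
  set D := X ∪ Ici β
  have hD : ¬ BddAbove D := fun h ↦ not_bddAbove_Ici β (h.mono subset_union_right)
  have hDX : ∀ x ∈ D, x < β → x ∈ X := fun x hx hxβ ↦ hx.resolve_right (not_le.2 hxβ)
  have hclosed : ∀ t ⊆ D, t.Nonempty → BddAbove t → sSup t ∈ D := by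
    intro t ht hne hbdd
    rcases le_or_gt β (sSup t) with h | h
    · exact Or.inr h
    · exact Or.inl (hX.2.1 t (fun x hx ↦ hDX x (ht hx) ((le_csSup hbdd hx).trans_lt h)) hne h)
  have hf := isNormal_enumOrd hclosed hD
  obtain ⟨m, hm⟩ := enumOrd_surjective hD (Or.inr (mem_Ici.2 le_rfl) : β ∈ D)
  refine ⟨enumOrd D, hf, m, hm, subset_antisymm ?_ fun x hx ↦ ?_⟩
  · rintro _ ⟨i, hi, rfl⟩
    exact hDX _ (enumOrd_mem hD i) (hm ▸ hf.strictMono hi)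
  · obtain ⟨i, rfl⟩ := enumOrd_surjective hD (Or.inl hx : x ∈ D)
    exact ⟨i, hf.strictMono.lt_iff_lt.1 (hm ▸ hX.1 hx), rfl⟩

lemma isSuccLimit_of_isClubIn_image_Iio (hf : StrictMono f) {m : Ordinal.{u}}
    (hX : IsClubIn (f '' Iio m) (f m)) (hm : IsSuccLimit (f m)) : IsSuccLimit m := by
  refine Ordinal.isSuccLimit_iff.2 ⟨?_, isSuccPrelimit_of_succ_lt fun a ha ↦ ?_⟩
  · rintro rfl
    obtain ⟨_, ⟨i, hi, -⟩, -⟩ := hX.2.2 _ hm.bot_lt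
    exact not_lt_zero (mem_Iio.1 hi)
  · obtain ⟨_, ⟨i, hi, rfl⟩, hai⟩ := hX.2.2 _ (hf ha)
    exact (succ_le_of_lt (hf.lt_iff_lt.1 hai)).trans_lt hi

lemma Order.IsNormal.isClubIn_Iio_inter_preimage (hf : IsNormal f) {m : Ordinal.{u}}
    (hY : IsClubIn Y (f m)) (hYX : Y ⊆ f '' Iio m) : IsClubIn (Iio m ∩ f ⁻¹' Y) m := by
  refine ⟨inter_subset_left, fun s hs hne hlt ↦ ⟨hlt, ?_⟩, fun η hη ↦ ?_⟩
  · have hsup : f (sSup s) = sSup (f '' s) := hf.map_sSup hne ⟨m, fun i hi ↦ (hs hi).1.le⟩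
    rw [mem_preimage, hsup]
    exact hY.2.1 _ (image_subset_iff.2 fun i hi ↦ (hs hi).2) (hne.image f)
      (hsup ▸ hf.strictMono hlt)
  · obtain ⟨y, hy, hηy⟩ := hY.2.2 _ (hf.strictMono hη)
    obtain ⟨j, hj, rfl⟩ := hYX hy
    exact ⟨j, ⟨hj, hy⟩, hf.strictMono.lt_iff_lt.1 hηy⟩

lemma IsClubIn.isClub (hX : IsClubIn X β) : IsClub (Subtype.val ⁻¹' X : Set (Iio β)) := by
  refine ⟨fun d hd hne _ a ha ↦ ?_, fun a ↦ ?_⟩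
  · have hbdd : BddAbove (Subtype.val '' d) := ⟨a, forall_mem_image.2 fun x hx ↦ ha.1 hx⟩
    have hsup_le : sSup (Subtype.val '' d) ≤ a := csSup_le (hne.image _) (forall_mem_image.2 ha.1)
    have ha_eq : (a : Ordinal) = sSup (Subtype.val '' d) :=
      le_antisymm (ha.2 (show ⟨_, hsup_le.trans_lt a.2⟩ ∈ upperBounds d from
        fun x hx ↦ le_csSup hbdd (mem_image_of_mem _ hx))) hsup_le
    rw [mem_preimage, ha_eq]
    exact hX.2.1 _ (image_subset_iff.2 hd) (hne.image _) (ha_eq ▸ a.2)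
  · obtain ⟨x, hx, hax⟩ := hX.2.2 a a.2
    exact ⟨⟨x, hX.1 hx⟩, hx, hax.le⟩

lemma IsClubIn.inter (hβ : ℵ₀ < β.cof) (hX : IsClubIn X β) (hY : IsClubIn Y β) :
    IsClubIn (X ∩ Y) β := by
  refine ⟨inter_subset_left.trans hX.1, fun s hs hne hlt ↦
    ⟨hX.2.1 s (hs.trans inter_subset_left) hne hlt, hY.2.1 s (hs.trans inter_subset_right) hne hlt⟩,
    fun η hη ↦ ?_⟩
  have hcof : Order.cof (Iio β) ≠ ℵ₀ := by
    rw [Ordinal.cof_Iio, ← Ordinal.lift_cof]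
    exact (aleph0_lt_lift.2 hβ).ne'
  have hlim : IsSuccLimit β := one_lt_cof_iff.1 (one_lt_aleph0.trans hβ)
  obtain ⟨x, hx, hηx⟩ := (hX.isClub.inter hcof hY.isClub).isCofinal ⟨succ η, hlim.succ_lt hη⟩
  exact ⟨x, hx, succ_le_iff.1 (Subtype.coe_le_coe.2 hηx)⟩

lemma IsClubIn.inter_Ioi (hX : IsClubIn X β) {a : Ordinal.{u}} (ha : a < β) :
    IsClubIn (X ∩ Ioi a) β := by
  refine ⟨inter_subset_left.trans hX.1,
    fun s hs hne hlt ↦ ⟨hX.2.1 s (hs.trans inter_subset_left) hne hlt, ?_⟩, fun η hη ↦ ?_⟩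
  · obtain ⟨x, hx⟩ := hne
    exact (hs hx).2.trans_le (le_csSup ⟨_, fun y hy ↦ (hX.1 (hs hy).1).le⟩ hx)
  · obtain ⟨x, hx, hx'⟩ := hX.2.2 _ (max_lt hη ha)
    exact ⟨x, ⟨hx, (le_max_right η a).trans_lt hx'⟩, (le_max_left η a).trans_lt hx'⟩

lemma IsClubIn.exists_mem_cof_eq {μ : Ordinal.{u}} {c : Cardinal.{u}} (hX : IsClubIn X μ)
    (hc : c.IsRegular) (hcμ : c < μ.cof) : ∃ β ∈ X, β.cof = c ∧ IsClubIn (X ∩ Iio β) β := by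
  obtain ⟨f, hf, m, rfl, rfl⟩ := hX.exists_isNormal
  have hc1 : 1 < c := one_lt_aleph0.trans_le hc.aleph0_le
  have hm := isSuccLimit_of_isClubIn_image_Iio hf.strictMono hX
    (one_lt_cof_iff.1 (hc1.trans hcμ))
  rw [cof_map_of_isNormal hf hm] at hcμ
  have hcm : c.ord < m := (ord_lt_ord.2 hcμ).trans_le (ord_cof_le m)
  have hlim : IsSuccLimit c.ord := isSuccLimit_ord hc.aleph0_le
  refine ⟨f c.ord, mem_image_of_mem f hcm, ?_, ?_⟩
  · rw [cof_map_of_isNormal hf hlim, hc.cof_ord]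
  · rw [hf.strictMono.image_Iio_inter_Iio hcm.le]
    exact hf.isClubIn_image_Iio hlim

lemma IsClubIn.exists_isSing_mem {μ : Ordinal.{u}} {c : Cardinal.{u}} (hX : IsClubIn X μ)
    (hc : c.IsRegular) (hcμ : c < μ.cof) :
    ∃ β ∈ X, IsSing β ∧ β.cof = c ∧ ∃ E ⊆ X, IsClubIn E β := by
  have hcμ' : c.ord < μ := (ord_lt_ord.2 hcμ).trans_le (ord_cof_le μ)
  obtain ⟨β, ⟨hβX, hcβ⟩, hβc, hE⟩ := (hX.inter_Ioi hcμ').exists_mem_cof_eq hc hcμ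
  refine ⟨β, hβX, ⟨one_lt_cof_iff.1 ?_, hβc ▸ hcβ⟩, hβc, _, fun x hx ↦ hx.1.1, hE⟩
  exact hβc ▸ one_lt_aleph0.trans_le hc.aleph0_le

lemma Order.IsNormal.mem_limPts_image_Iio (hf : IsNormal f) {σ m : Ordinal.{u}}
    (hσ : IsSuccLimit σ) (hσm : σ < m) : f σ ∈ limPts (f '' Iio m) := by
  refine ⟨hf.map_isSuccLimit hσ, ?_⟩
  rw [hf.strictMono.image_Iio_inter_Iio hσm.le]
  exact (hf.isLUB_image_Iio_of_isSuccLimit hσ).csSup_eq ⟨f ⊥, mem_image_of_mem f hσ.bot_lt⟩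

end Club

lemma IsAssocFn.isSing_and_apply_eq_succ {S : GlobalSquare} {ν : Ordinal.{0} → ℕ}
    (hν : IsAssocFn S ν) {f : Ordinal.{0} → Ordinal.{0}} (hf : IsNormal f) {m : Ordinal.{0}}
    (hm : IsSing (f m)) (hC : f '' Iio m = S.C (f m)) {σ : Ordinal.{0}} (hσ : IsSing σ)
    (hσm : σ < m) : IsSing (f σ) ∧ ν (f σ) = ν σ + 1 := by
  have hlim : f σ ∈ limPts (S.C (f m)) := hC ▸ hf.mem_limPts_image_Iio hσ.1 hσm
  obtain ⟨hsing, hcoh⟩ := S.coh _ hm _ hlim (hf.strictMono hσm)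
  have hot : otype (S.C (f σ)) = σ := by
    rw [hcoh, ← hC, hf.strictMono.image_Iio_inter_Iio hσm.le, hf.strictMono.otype_image_Iio]
  exact ⟨hsing, by rw [hν _ hsing, hot, if_pos hσ]⟩

lemma aleph0_le_succIt (k : ℕ) : ℵ₀ ≤ succIt (ℵ₀ : Cardinal.{u}) k := by
  induction k with
  | zero => exact le_rfl
  | succ k ih => exact ih.trans (le_succ _)

lemma isRegular_succIt (k : ℕ) : (succIt (ℵ₀ : Cardinal.{u}) k).IsRegular := by
  cases k with
  | zero => exact isRegular_aleph0
  | succ k => exact isRegular_succ (aleph0_le_succIt k)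

lemma IsAssocFn.exists_mem_le_of_isClubIn {S : GlobalSquare} {ν : Ordinal.{0} → ℕ}
    (hν : IsAssocFn S ν) (k : ℕ) {μ : Ordinal.{0}} (hμ : succIt ℵ₀ (k + 1) ≤ μ.cof)
    {F : Set Ordinal.{0}} (hF : IsClubIn F μ) : ∃ γ ∈ F, IsSing γ ∧ k ≤ ν γ := by
  induction k generalizing μ F with
  | zero =>
    obtain ⟨β, hβF, hβ, -⟩ := hF.exists_isSing_mem isRegular_aleph0 ((lt_succ ℵ₀).trans_le hμ)
    exact ⟨β, hβF, hβ, Nat.zero_le _⟩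
  | succ k ih =>
    obtain ⟨β, hβF, hβ, hβc, E, hEF, hE⟩ :=
      hF.exists_isSing_mem (isRegular_succIt (k + 1)) ((lt_succ _).trans_le hμ)
    have hCE : IsClubIn (S.C β ∩ E) β :=
      (S.club β hβ).inter (hβc ▸ (aleph0_le_succIt k).trans_lt (lt_succ _)) hE
    obtain ⟨f, hf, m, rfl, hC⟩ := (S.club β hβ).exists_isNormal
    have hlim : IsSuccLimit m :=
      isSuccLimit_of_isClubIn_image_Iio hf.strictMono (hC ▸ S.club _ hβ) hβ.1
    obtain ⟨σ, ⟨hσm, -, hσE⟩, hσ, hkσ⟩ := ih (by rw [← cof_map_of_isNormal hf hlim, hβc])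
      (hf.isClubIn_Iio_inter_preimage hCE (hC ▸ inter_subset_left))
    obtain ⟨hγ, hνγ⟩ := hν.isSing_and_apply_eq_succ hf hβ hC hσ hσm
    exact ⟨f σ, hEF hσE, hγ, hνγ ▸ Nat.succ_le_succ hkσ⟩

/-- `{β | β singular, n β ≥ k}` is stationary in the ordinals. -/
theorem nu_ge_stationary (S : GlobalSquare) (ν : Ordinal → ℕ)
    (hν : IsAssocFn S ν) (k : ℕ)
    (C : Set Ordinal) (hclosed : IsClosedSet C) (hub : ∀ η, ∃ x ∈ C, η < x) :
    ∃ β ∈ C, IsSing β ∧ k ≤ ν β := by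
  have hc := isRegular_succIt (k + 1)
  have hC : ¬ BddAbove C := not_bddAbove_iff.2 hub
  have hf := isNormal_enumOrd hclosed hC
  have hlim : IsSuccLimit (succIt ℵ₀ (k + 1)).ord := isSuccLimit_ord hc.aleph0_le
  have hCμ := hf.isClubIn_image_Iio hlim
  rw [← hf.strictMono.range_inter_Iio, range_enumOrd hC] at hCμ
  obtain ⟨γ, hγ, hγsing, hkγ⟩ :=
    hν.exists_mem_le_of_isClubIn k (by rw [cof_map_of_isNormal hf hlim, hc.cof_ord]) hCμ
  exact ⟨γ, hγ.1, hγsing, hkγ⟩
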